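/- Let d1, d2 be positive integers, α, R > 0, set r = (R/α)², and let 0 < γ ≤ 1 be such that r/γ² is an integer with r/γ² ≤ min(d1, d2). Then there exists a set S(α, γ) of d1×d2 real matrices with cardinality |S(α, γ)| = ⌊exp( r · max(d1, d2) / (16 γ²) )⌋ + 1 such that: (i) every N ∈ S(α, γ) has all entries in {−γα/2, +γα/2} (so ‖N‖_∞ = γα/2 and ‖N‖_F²/(d1 d2) = γ²α²/4), rank(N) ≤ r/γ², and N ∈ K_max(α, R); (ii) for any two distinct N, N' ∈ S(α, γ), ‖N − N'‖_F² / (d1 d2) > γ²α²/8. -/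

import Mathlib

open scoped BigOperators
open Matrix

/-- The elementwise `ℓ∞`-norm of a matrix: `max_{k,l} |M_{k,l}|`. -/
noncomputable def linfNorm {d1 d2 : ℕ} (M : Matrix (Fin d1) (Fin d2) ℝ) : ℝ :=
  ⨆ k, ⨆ l, |M k l|

/-- The Frobenius norm of a real matrix. -/
noncomputable def frobeniusNorm {d1 d2 : ℕ} (M : Matrix (Fin d1) (Fin d2) ℝ) : ℝ :=
  Real.sqrt (∑ k, ∑ l, (M k l) ^ 2)

/-- The largest `ℓ₂`-norm of a row of a matrix (the `(2,∞)` operator norm). -/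
noncomputable def rowMaxNorm {n k : ℕ} (U : Matrix (Fin n) (Fin k) ℝ) : ℝ :=
  ⨆ i, Real.sqrt (∑ j, (U i j) ^ 2)

/-- The max-norm of a real matrix: the infimum of `‖U‖_{2,∞} ‖V‖_{2,∞}` over all
factorizations `M = U * Vᵀ`. -/
noncomputable def maxNorm {d1 d2 : ℕ} (M : Matrix (Fin d1) (Fin d2) ℝ) : ℝ :=
  sInf { c : ℝ | ∃ (k : ℕ) (U : Matrix (Fin d1) (Fin k) ℝ) (V : Matrix (Fin d2) (Fin k) ℝ),
    0 < k ∧ M = U * Vᵀ ∧ c = rowMaxNorm U * rowMaxNorm V }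

/-!
A greedy (Gilbert–Varshamov) argument gives `⌊exp (n / 16)⌋ + 1` binary words of length
`n = max d1 d2 * m` at pairwise Hamming distance `> n / 4`, since a Hamming ball of radius `n / 4`
has at most `3 ^ (n / 4) (4 / 3) ^ n < 2 ^ n / exp (n / 16)` points. Read a word as a
`max d1 d2 × m` matrix `S` with entries `±c`, `c = γα/2`, and repeat its columns periodically to
fill the long side. The result is `S Eᵀ` where the rows of `E` are standard basis vectors, so it
has rank at most `m` and max-norm at most `c √m = R / 2`. Every column of `S` is repeated at least
`⌊d2 / m⌋ ≥ d2 / (2m)` times, which turns Hamming distance `> n / 4` into squared Frobenius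
distance `> d1 d2 c² / 2 = d1 d2 γ²α² / 8`.
-/

open Finset Matrix Real

section Hamming

variable {ι : Type*} [Fintype ι] [DecidableEq ι]

theorem card_hammingBall_le (x : ι → Bool) (t : ℕ) :
    #{y | hammingDist x y ≤ t} ≤ ∑ i ∈ range (t + 1), (Fintype.card ι).choose i := by
  have hdiff_inj : Set.InjOn (fun y : ι → Bool => ({i | x i ≠ y i} : Finset ι)) Set.univ := by
    intro y _ z _ h
    funext i
    have hi := congrArg (i ∈ ·) h
    simp only [mem_filter, mem_univ, true_and, eq_iff_iff] at hi
    revert hi; cases x i <;> cases y i <;> cases z i <;> decide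
  calc #{y | hammingDist x y ≤ t}
      ≤ #((range (t + 1)).biUnion fun i => powersetCard i (univ : Finset ι)) := by
        refine card_le_card_of_injOn _ (fun y hy => ?_) (hdiff_inj.mono (Set.subset_univ _))
        have hy : hammingDist x y ≤ t := by simpa using hy
        exact mem_biUnion.2 ⟨_, mem_range.2 (Nat.lt_succ_of_le hy), mem_powersetCard_univ.2 rfl⟩
    _ ≤ ∑ i ∈ range (t + 1), #(powersetCard i (univ : Finset ι)) := card_biUnion_le
    _ = ∑ i ∈ range (t + 1), (Fintype.card ι).choose i := by simp [card_powersetCard]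

theorem exists_card_eq_pairwise_lt_hammingDist (t K : ℕ)
    (h : K * ∑ i ∈ range (t + 1), (Fintype.card ι).choose i < 2 ^ Fintype.card ι) :
    ∃ A : Finset (ι → Bool), #A = K + 1 ∧
      (A : Set (ι → Bool)).Pairwise fun x y => t < hammingDist x y := by
  induction K with
  | zero => exact ⟨{fun _ => false}, rfl, by simp⟩
  | succ K ih =>
    obtain ⟨A, hcard, hA⟩ := ih (lt_of_le_of_lt (Nat.mul_le_mul_right _ K.le_succ) h)
    let balls := A.biUnion fun x => {y | hammingDist x y ≤ t}
    have hballs : #balls < Fintype.card (ι → Bool) := by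
      calc #balls ≤ ∑ x ∈ A, #{y | hammingDist x y ≤ t} := card_biUnion_le
        _ ≤ ∑ _x ∈ A, ∑ i ∈ range (t + 1), (Fintype.card ι).choose i :=
          sum_le_sum fun x _ => card_hammingBall_le x t
        _ < Fintype.card (ι → Bool) := by simpa [hcard] using h
    obtain ⟨z, -, hz⟩ := exists_mem_notMem_of_card_lt_card
      (hballs.trans_eq card_univ.symm)
    have hfar : ∀ x ∈ A, t < hammingDist x z := fun x hx =>
      not_le.1 fun hle => hz (mem_biUnion.2 ⟨x, hx, by simpa using hle⟩)
    have hzA : z ∉ A := fun hzA => by simpa using hfar z hzA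
    refine ⟨insert z A, by rw [card_insert_of_notMem hzA, hcard], ?_⟩
    rw [coe_insert, Set.pairwise_insert]
    exact ⟨hA, fun x hx _ => ⟨hammingDist_comm x z ▸ hfar x hx, hfar x hx⟩⟩

end Hamming

theorem pow_mul_sum_range_choose_le {n t : ℕ} (ht : t ≤ n) {x : ℝ} (hx0 : 0 ≤ x) (hx1 : x ≤ 1) :
    x ^ t * ∑ i ∈ range (t + 1), (n.choose i : ℝ) ≤ (1 + x) ^ n := by
  calc x ^ t * ∑ i ∈ range (t + 1), (n.choose i : ℝ)
      ≤ ∑ i ∈ range (t + 1), x ^ i * n.choose i := by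
        rw [mul_sum]
        exact sum_le_sum fun i hi => mul_le_mul_of_nonneg_right
          (pow_le_pow_of_le_one hx0 hx1 (mem_range_succ_iff.1 hi)) (Nat.cast_nonneg _)
    _ ≤ ∑ i ∈ range (n + 1), x ^ i * n.choose i :=
        sum_le_sum_of_subset_of_nonneg (range_subset_range.2 (by omega)) fun _ _ _ => by positivity
    _ = (1 + x) ^ n := by simp [add_comm 1 x, add_pow]

theorem floor_exp_mul_sum_range_choose_lt {n : ℕ} (hn : 0 < n) :
    ⌊exp (n / 16)⌋₊ * ∑ i ∈ range (n / 4 + 1), n.choose i < 2 ^ n := by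
  set t := n / 4
  set S := ∑ i ∈ range (t + 1), (n.choose i : ℝ)
  have hS : S ≤ 3 ^ t * (4 / 3) ^ n := by
    have h := pow_mul_sum_range_choose_le (n := n) (Nat.div_le_self n 4)
      (x := 1 / 3) (by norm_num) (by norm_num)
    rw [div_pow, one_pow, one_div_mul_eq_div, div_le_iff₀ (by positivity)] at h
    norm_num at h
    linarith
  -- the 16th power clears the denominators of `n / 16` and `n / 4`
  have hpow :
      (exp (n / 16) * (3 ^ t * (4 / 3) ^ n)) ^ 16 ≤ (exp 1 * 81 * (4 / 3) ^ 16) ^ n := by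
    have h3 : ((3 : ℝ) ^ t) ^ 16 ≤ 81 ^ n := by
      rw [← pow_mul, show (81 : ℝ) = 3 ^ 4 by norm_num, ← pow_mul]
      exact pow_le_pow_right₀ (by norm_num) (by omega)
    have he : exp (n / 16) ^ 16 = exp 1 ^ n := by
      rw [← exp_nat_mul, ← exp_nat_mul]; ring_nf
    calc (exp (n / 16) * (3 ^ t * (4 / 3) ^ n)) ^ 16
        = exp 1 ^ n * ((3 : ℝ) ^ t) ^ 16 * ((4 / 3) ^ 16) ^ n := by
          rw [mul_pow, mul_pow, he, ← pow_mul _ n 16, ← pow_mul _ 16 n, mul_comm n 16]; ring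
      _ ≤ exp 1 ^ n * 81 ^ n * ((4 / 3) ^ 16) ^ n := by gcongr
      _ = (exp 1 * 81 * (4 / 3) ^ 16) ^ n := by rw [mul_pow, mul_pow]
  have hbase : exp 1 * 81 * (4 / 3 : ℝ) ^ 16 < 2 ^ 16 := by
    nlinarith [exp_one_lt_d9]
  have hlt : exp (n / 16) * (3 ^ t * (4 / 3) ^ n) < 2 ^ n := by
    refine lt_of_pow_lt_pow_left₀ 16 (by positivity) (hpow.trans_lt ?_)
    rw [← pow_mul, mul_comm n, pow_mul]
    exact pow_lt_pow_left₀ hbase (by positivity) hn.ne'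
  have hreal : (⌊exp (n / 16)⌋₊ : ℝ) * S < 2 ^ n :=
    calc (⌊exp (n / 16)⌋₊ : ℝ) * S ≤ exp (n / 16) * (3 ^ t * (4 / 3) ^ n) :=
          mul_le_mul (Nat.floor_le (exp_nonneg _)) hS (by positivity) (exp_nonneg _)
      _ < 2 ^ n := hlt
  rw [← Nat.cast_lt (α := ℝ)]
  push_cast
  exact hreal

theorem mul_sum_le_sum_comp {α β : Type*} [Fintype α] [Fintype β] [DecidableEq β] (f : α → β)
    {q : ℕ} (hq : ∀ j, q ≤ #{l | f l = j}) {g : β → ℝ} (hg : ∀ j, 0 ≤ g j) :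
    q * ∑ j, g j ≤ ∑ l, g (f l) := by
  rw [← sum_fiberwise' univ f g, mul_sum]
  refine sum_le_sum fun j _ => ?_
  rw [sum_const, nsmul_eq_mul]
  exact mul_le_mul_of_nonneg_right (by exact_mod_cast hq j) (hg j)

theorem div_le_card_filter_ofNat_eq (d m : ℕ) [NeZero m] (j : Fin m) :
    d / m ≤ #{l : Fin d | Fin.ofNat m l = j} := by
  have hlt : ∀ i : Fin (d / m), (j : ℕ) + m * i < d := fun i =>
    calc (j : ℕ) + m * i < m * (i + 1) := by linarith [j.isLt]
      _ ≤ m * (d / m) := Nat.mul_le_mul_left m i.isLt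
      _ ≤ d := Nat.mul_div_le d m
  calc d / m = #(univ : Finset (Fin (d / m))) := by simp
    _ ≤ #{l : Fin d | Fin.ofNat m l = j} := by
      refine card_le_card_of_injOn (fun i => ⟨j + m * i, hlt i⟩) (fun i _ => ?_) ?_
      · simp [Fin.ext_iff, Nat.add_mul_mod_self_left, Nat.mod_eq_of_lt j.isLt]
      · intro i _ i' _ h
        have := congrArg Fin.val h
        simp only at this
        exact Fin.ext (Nat.eq_of_mul_eq_mul_left (NeZero.pos m) (by omega))

theorem le_two_mul_mul_div {d m : ℕ} (hm : 0 < m) (hmd : m ≤ d) : d ≤ 2 * (m * (d / m)) := by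
  have h1 := Nat.div_add_mod d m
  have h2 := Nat.mod_lt d hm
  have h3 : m ≤ m * (d / m) := Nat.le_mul_of_pos_right m (Nat.div_pos hmd hm)
  omega

section Norms

variable {d1 d2 : ℕ}

theorem frobeniusNorm_sq (M : Matrix (Fin d1) (Fin d2) ℝ) :
    frobeniusNorm M ^ 2 = ∑ k, ∑ l, M k l ^ 2 :=
  Real.sq_sqrt (by positivity)

theorem frobeniusNorm_transpose (M : Matrix (Fin d1) (Fin d2) ℝ) :
    frobeniusNorm Mᵀ = frobeniusNorm M := by
  rw [frobeniusNorm, frobeniusNorm, sum_comm]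
  rfl

theorem linfNorm_eq_of_forall_eq_or_eq_neg [NeZero d1] [NeZero d2] {c : ℝ} (hc : 0 ≤ c)
    {N : Matrix (Fin d1) (Fin d2) ℝ} (hN : ∀ k l, N k l = c ∨ N k l = -c) :
    linfNorm N = c := by
  have habs : ∀ k l, |N k l| = c := fun k l => by
    rcases hN k l with h | h <;> simp [h, abs_of_nonneg hc]
  simp only [linfNorm, habs, ciSup_const]

theorem frobeniusNorm_sq_eq_of_forall_eq_or_eq_neg {c : ℝ} {N : Matrix (Fin d1) (Fin d2) ℝ}
    (hN : ∀ k l, N k l = c ∨ N k l = -c) :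
    frobeniusNorm N ^ 2 = d1 * d2 * c ^ 2 := by
  have hsq : ∀ k l, N k l ^ 2 = c ^ 2 := fun k l => by
    rcases hN k l with h | h <;> simp [h]
  simp only [frobeniusNorm_sq, hsq, sum_const, card_univ, Fintype.card_fin, nsmul_eq_mul]
  ring

theorem rowMaxNorm_nonneg {k : ℕ} (U : Matrix (Fin d1) (Fin k) ℝ) : 0 ≤ rowMaxNorm U :=
  Real.iSup_nonneg fun _ => Real.sqrt_nonneg _

theorem rowMaxNorm_le_of_abs_le {k : ℕ} {U : Matrix (Fin d1) (Fin k) ℝ} {c : ℝ} (hc : 0 ≤ c)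
    (hU : ∀ i j, |U i j| ≤ c) : rowMaxNorm U ≤ c * √k := by
  refine Real.iSup_le (fun i => ?_) (by positivity)
  calc √(∑ j, U i j ^ 2) ≤ √(∑ _j : Fin k, c ^ 2) :=
        Real.sqrt_le_sqrt (sum_le_sum fun j _ => sq_le_sq.2 ((hU i j).trans (le_abs_self c)))
    _ = c * √k := by
        rw [sum_const, card_univ, Fintype.card_fin, nsmul_eq_mul,
          Real.sqrt_mul (Nat.cast_nonneg k), Real.sqrt_sq hc, mul_comm]

theorem rowMaxNorm_one_submatrix_le {m : ℕ} (f : Fin d2 → Fin m) :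
    rowMaxNorm ((1 : Matrix (Fin m) (Fin m) ℝ).submatrix f id) ≤ 1 := by
  refine Real.iSup_le (fun l => ?_) zero_le_one
  simp [Matrix.one_apply, ite_pow]

theorem maxNorm_le_of_eq_mul_transpose {k : ℕ} (hk : 0 < k) {M : Matrix (Fin d1) (Fin d2) ℝ}
    {U : Matrix (Fin d1) (Fin k) ℝ} {V : Matrix (Fin d2) (Fin k) ℝ} (hM : M = U * Vᵀ) :
    maxNorm M ≤ rowMaxNorm U * rowMaxNorm V := by
  refine csInf_le ⟨0, ?_⟩ ⟨k, U, V, hk, hM, rfl⟩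
  rintro _ ⟨_, U', V', -, -, rfl⟩
  exact mul_nonneg (rowMaxNorm_nonneg U') (rowMaxNorm_nonneg V')

theorem maxNorm_transpose (M : Matrix (Fin d1) (Fin d2) ℝ) : maxNorm Mᵀ = maxNorm M := by
  rw [maxNorm, maxNorm]
  congr 1
  ext c
  constructor
  · rintro ⟨k, U, V, hk, hM, rfl⟩
    refine ⟨k, V, U, hk, ?_, mul_comm _ _⟩
    rw [← transpose_transpose M, hM, transpose_mul, transpose_transpose]
  · rintro ⟨k, U, V, hk, hM, rfl⟩
    exact ⟨k, V, U, hk, by rw [hM, transpose_mul, transpose_transpose], mul_comm _ _⟩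

theorem maxNorm_submatrix_le {m : ℕ} (hm : 0 < m) (S : Matrix (Fin d1) (Fin m) ℝ)
    (f : Fin d2 → Fin m) : maxNorm (S.submatrix id f) ≤ rowMaxNorm S := by
  have hS : S.submatrix id f = S * ((1 : Matrix (Fin m) (Fin m) ℝ).submatrix f id)ᵀ := by
    rw [transpose_submatrix, transpose_one]
    exact (mul_submatrix_one (Equiv.refl _) f S).symm
  calc maxNorm (S.submatrix id f)
      ≤ rowMaxNorm S * rowMaxNorm ((1 : Matrix (Fin m) (Fin m) ℝ).submatrix f id) :=
        maxNorm_le_of_eq_mul_transpose hm hS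
    _ ≤ rowMaxNorm S :=
        mul_le_of_le_one_right (rowMaxNorm_nonneg S) (rowMaxNorm_one_submatrix_le f)

end Norms

section SignMatrix

variable {ι κ : Type*}

def signMatrix (c : ℝ) (B : ι × κ → Bool) : Matrix ι κ ℝ :=
  Matrix.of fun k j => if B (k, j) then c else -c

theorem signMatrix_eq_or_eq_neg (c : ℝ) (B : ι × κ → Bool) (k : ι) (j : κ) :
    signMatrix c B k j = c ∨ signMatrix c B k j = -c := by
  by_cases h : B (k, j) <;> simp [signMatrix, h]

theorem sum_sum_sub_signMatrix_sq [Fintype ι] [Fintype κ] [DecidableEq ι] [DecidableEq κ]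
    (c : ℝ) (B B' : ι × κ → Bool) :
    ∑ k, ∑ j, (signMatrix c B k j - signMatrix c B' k j) ^ 2
      = hammingDist B B' * (2 * c) ^ 2 := by
  have hsq : ∀ p : ι × κ, (signMatrix c B p.1 p.2 - signMatrix c B' p.1 p.2) ^ 2
      = if B p ≠ B' p then (2 * c) ^ 2 else 0 := fun p => by
    cases h : B p <;> cases h' : B' p <;> simp [signMatrix, h, h'] <;> ring
  rw [← Fintype.sum_prod_type' (fun k j => (signMatrix c B k j - signMatrix c B' k j) ^ 2)]
  simp only [hsq, sum_ite, sum_const_zero, add_zero, sum_const, nsmul_eq_mul]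
  rfl

end SignMatrix

section Tiling

variable {d1 d2 m : ℕ} [NeZero m]

def tiledSignMatrix (c : ℝ) (B : Fin d1 × Fin m → Bool) : Matrix (Fin d1) (Fin d2) ℝ :=
  (signMatrix c B).submatrix id (Fin.ofNat m ·)

theorem tiledSignMatrix_eq_or_eq_neg (c : ℝ) (B : Fin d1 × Fin m → Bool) (k : Fin d1)
    (l : Fin d2) : tiledSignMatrix c B k l = c ∨ tiledSignMatrix c B k l = -c :=
  signMatrix_eq_or_eq_neg c B k _

theorem rank_tiledSignMatrix_le (c : ℝ) (B : Fin d1 × Fin m → Bool) :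
    (tiledSignMatrix (d2 := d2) c B).rank ≤ m :=
  (rank_submatrix_le _ _ _).trans (rank_le_width _)

theorem maxNorm_tiledSignMatrix_le {c : ℝ} (hc : 0 ≤ c) (B : Fin d1 × Fin m → Bool) :
    maxNorm (tiledSignMatrix (d2 := d2) c B) ≤ c * √m := by
  refine (maxNorm_submatrix_le (NeZero.pos m) _ _).trans
    (rowMaxNorm_le_of_abs_le hc fun k j => ?_)
  rcases signMatrix_eq_or_eq_neg c B k j with h | h <;> simp [h, abs_of_nonneg hc]

theorem lt_frobeniusNorm_tiledSignMatrix_sub_sq {c : ℝ} (hc : 0 < c) (hmd : m ≤ d2)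
    {B B' : Fin d1 × Fin m → Bool} (hB : d1 * m < 4 * hammingDist B B') :
    d1 * d2 * c ^ 2 / 2 <
      frobeniusNorm (tiledSignMatrix (d2 := d2) c B - tiledSignMatrix c B') ^ 2 := by
  set q := d2 / m
  set h := hammingDist B B'
  have hq : 0 < q := Nat.div_pos hmd (NeZero.pos m)
  have hcount : d1 * d2 < 8 * q * h :=
    calc d1 * d2 ≤ d1 * (2 * (m * q)) :=
          Nat.mul_le_mul_left d1 (le_two_mul_mul_div (NeZero.pos m) hmd)
      _ = 2 * q * (d1 * m) := by ring
      _ < 2 * q * (4 * h) := Nat.mul_lt_mul_of_pos_left hB (by omega)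
      _ = 8 * q * h := by ring
  -- every column of the sign matrix is repeated at least `q` times in the tiling
  have hrepeat : (q : ℝ) * (h * (2 * c) ^ 2)
      ≤ frobeniusNorm (tiledSignMatrix (d2 := d2) c B - tiledSignMatrix c B') ^ 2 := by
    rw [frobeniusNorm_sq, ← sum_sum_sub_signMatrix_sq, mul_sum]
    exact sum_le_sum fun k _ => mul_sum_le_sum_comp (fun l : Fin d2 => Fin.ofNat m l)
      (div_le_card_filter_ofNat_eq d2 m) fun j => sq_nonneg _
  calc d1 * d2 * c ^ 2 / 2 < ((8 * q * h : ℕ) : ℝ) * c ^ 2 / 2 := by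
        gcongr
        exact_mod_cast hcount
    _ = q * (h * (2 * c) ^ 2) := by push_cast; ring
    _ ≤ _ := hrepeat

end Tiling

structure IsSignPacking {d1 d2 : ℕ} (c : ℝ) (m : ℕ) (P : Finset (Matrix (Fin d1) (Fin d2) ℝ)) :
    Prop where
  eq_or_eq_neg : ∀ N ∈ P, ∀ k l, N k l = c ∨ N k l = -c
  rank_le : ∀ N ∈ P, N.rank ≤ m
  maxNorm_le : ∀ N ∈ P, maxNorm N ≤ c * √m
  separated : (P : Set (Matrix (Fin d1) (Fin d2) ℝ)).Pairwise fun N N' =>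
    d1 * d2 * c ^ 2 / 2 < frobeniusNorm (N - N') ^ 2

theorem IsSignPacking.image_transpose {d1 d2 m : ℕ} {c : ℝ}
    {P : Finset (Matrix (Fin d1) (Fin d2) ℝ)} (hP : IsSignPacking c m P) :
    IsSignPacking c m (P.image transpose) where
  eq_or_eq_neg := forall_mem_image.2 fun N hN k l => hP.eq_or_eq_neg N hN l k
  rank_le := forall_mem_image.2 fun N hN => (rank_transpose N).trans_le (hP.rank_le N hN)
  maxNorm_le :=
    forall_mem_image.2 fun N hN => (maxNorm_transpose N).trans_le (hP.maxNorm_le N hN)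
  separated := by
    rw [coe_image, transpose_injective.injOn.pairwise_image]
    refine hP.separated.imp fun N N' h => ?_
    rwa [Function.onFun, ← transpose_sub, frobeniusNorm_transpose, mul_comm (d2 : ℝ)]

theorem exists_isSignPacking_of_le {d1 d2 m : ℕ} [NeZero m] (hd1 : 0 < d1) {c : ℝ} (hc : 0 < c)
    (hmd : m ≤ d2) :
    ∃ P : Finset (Matrix (Fin d1) (Fin d2) ℝ),
      #P = ⌊exp (d1 * m / 16)⌋₊ + 1 ∧ IsSignPacking c m P := by
  obtain ⟨A, hAcard, hA⟩ := exists_card_eq_pairwise_lt_hammingDist (ι := Fin d1 × Fin m)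
    (d1 * m / 4) ⌊exp (d1 * m / 16)⌋₊ (by
      simpa using floor_exp_mul_sum_range_choose_lt (Nat.mul_pos hd1 (NeZero.pos m)))
  have hsep : (A : Set (Fin d1 × Fin m → Bool)).Pairwise fun B B' => d1 * d2 * c ^ 2 / 2 <
      frobeniusNorm (tiledSignMatrix (d2 := d2) c B - tiledSignMatrix c B') ^ 2 :=
    hA.imp fun B B' h => lt_frobeniusNorm_tiledSignMatrix_sub_sq hc hmd (by omega)
  have hinj : Set.InjOn (tiledSignMatrix (d2 := d2) c) (A : Set (Fin d1 × Fin m → Bool)) := by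
    intro B hB B' hB' h
    by_contra hne
    have hlt := hsep hB hB' hne
    simp only [h, sub_self, frobeniusNorm_sq, Matrix.zero_apply, ne_eq, OfNat.ofNat_ne_zero,
      not_false_eq_true, zero_pow, sum_const_zero] at hlt
    exact hlt.not_ge (by positivity)
  refine ⟨A.image (tiledSignMatrix c), by rw [card_image_of_injOn hinj, hAcard], ?_⟩
  exact {
    eq_or_eq_neg := forall_mem_image.2 fun B _ => tiledSignMatrix_eq_or_eq_neg c B
    rank_le := forall_mem_image.2 fun B _ => rank_tiledSignMatrix_le c B
    maxNorm_le := forall_mem_image.2 fun B _ => maxNorm_tiledSignMatrix_le hc.le B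
    separated := by rwa [coe_image, hinj.pairwise_image] }

theorem exists_isSignPacking {d1 d2 m : ℕ} [NeZero m] (hd1 : 0 < d1) (hd2 : 0 < d2) {c : ℝ}
    (hc : 0 < c) (hmd1 : m ≤ d1) (hmd2 : m ≤ d2) :
    ∃ P : Finset (Matrix (Fin d1) (Fin d2) ℝ),
      #P = ⌊exp ((max d1 d2 : ℝ) * m / 16)⌋₊ + 1 ∧ IsSignPacking c m P := by
  rcases le_total d2 d1 with hle | hle
  · rw [max_eq_left (by exact_mod_cast hle)]
    exact exists_isSignPacking_of_le hd1 hc hmd2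
  · obtain ⟨P, hcard, hP⟩ := exists_isSignPacking_of_le (d2 := d1) hd2 hc hmd1
    refine ⟨P.image transpose, ?_, hP.image_transpose⟩
    rw [card_image_of_injective _ transpose_injective, hcard,
      max_eq_right (by exact_mod_cast hle)]

/-- existence of a packing set `S(α, γ) ⊆ K_max(α, R)` of cardinality
`⌊exp(r · max(d1,d2)/(16γ²))⌋ + 1` consisting of matrices with entries `±γα/2`
(hence `‖N‖_∞ = γα/2` and `‖N‖_F²/(d1 d2) = γ²α²/4`) and rank at most `r/γ²`, any
two distinct elements of which satisfy `‖N − N'‖_F²/(d1 d2) > γ²α²/8`; here `r = (R/α)²`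
and `r/γ²` is an integer which is at most `min(d1, d2)`. -/
theorem exists_packing_set (d1 d2 : ℕ) (hd1 : 0 < d1) (hd2 : 0 < d2) (α R γ : ℝ)
    (hα : 0 < α) (hR : 0 < R) (hγ0 : 0 < γ) (hγ1 : γ ≤ 1)
    (m : ℕ) (hm : (m : ℝ) = (R / α) ^ 2 / γ ^ 2) (hmle : m ≤ min d1 d2) :
    ∃ P : Finset (Matrix (Fin d1) (Fin d2) ℝ),
      P.card = Nat.floor (Real.exp ((R / α) ^ 2 * (max d1 d2 : ℝ) / (16 * γ ^ 2))) + 1 ∧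
      (∀ N ∈ P,
        (∀ k l, N k l = γ * α / 2 ∨ N k l = -(γ * α / 2)) ∧
        linfNorm N = γ * α / 2 ∧
        frobeniusNorm N ^ 2 / (d1 * d2 : ℝ) = γ ^ 2 * α ^ 2 / 4 ∧
        (N.rank : ℝ) ≤ (R / α) ^ 2 / γ ^ 2 ∧
        linfNorm N ≤ α ∧ maxNorm N ≤ R) ∧
      (∀ N ∈ P, ∀ N' ∈ P, N ≠ N' →
        γ ^ 2 * α ^ 2 / 8 < frobeniusNorm (N - N') ^ 2 / (d1 * d2 : ℝ)) := by
  have hm0 : 0 < m := by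
    have : (0 : ℝ) < m := hm ▸ by positivity
    exact_mod_cast this
  have : NeZero m := ⟨hm0.ne'⟩
  have : NeZero d1 := ⟨hd1.ne'⟩
  have : NeZero d2 := ⟨hd2.ne'⟩
  have hc : 0 < γ * α / 2 := by positivity
  have hdd : (0 : ℝ) < d1 * d2 := by positivity
  have hr : (R / α) ^ 2 = m * γ ^ 2 := by rw [hm]; field_simp
  have hcm : γ * α / 2 * √m = R / 2 := by
    rw [hm, Real.sqrt_div' _ (sq_nonneg γ), Real.sqrt_sq (by positivity), Real.sqrt_sq hγ0.le]
    field_simp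
  obtain ⟨P, hcard, hP⟩ := exists_isSignPacking hd1 hd2 hc
    (hmle.trans (min_le_left _ _)) (hmle.trans (min_le_right _ _))
  refine ⟨P, ?_, fun N hN => ?_, fun N hN N' hN' hne => ?_⟩
  · rw [hcard, hr]
    field_simp
  · have hlinf := linfNorm_eq_of_forall_eq_or_eq_neg hc.le (hP.eq_or_eq_neg N hN)
    refine ⟨hP.eq_or_eq_neg N hN, hlinf, ?_, ?_, ?_, ?_⟩
    · rw [frobeniusNorm_sq_eq_of_forall_eq_or_eq_neg (hP.eq_or_eq_neg N hN),
        mul_div_cancel_left₀ _ hdd.ne']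
      ring
    · rw [← hm]
      exact_mod_cast hP.rank_le N hN
    · rw [hlinf]
      nlinarith
    · linarith [hP.maxNorm_le N hN]
  · rw [lt_div_iff₀ hdd]
    linarith [hP.separated hN hN' hne]
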